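/- If probabilities are perturbed by at most δ, i.e., |q_i - p_i| ≤ δ for all i with p_i, q_i ∈ [0,1], then the corresponding Shapley values for the capacities T_p(S) = 1 - ∏_{j∈S}(1-p_j) and T_q(S) = 1 - ∏_{j∈S}(1-q_j) satisfy |φ_i(T_q) - φ_i(T_p)| ≤ δ·(n+1)/2 for every player i. -/

import Mathlib

noncomputable def shapleyProb {E : Type*} [Fintype E] [DecidableEq E]
    (p : E → ℝ) (i : E) : ℝ :=
  ∑ S ∈ (Finset.univ.erase i).powerset,
    (Nat.factorial S.card : ℝ) * (Nat.factorial (Fintype.card E - 1 - S.card)) /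
      (Nat.factorial (Fintype.card E)) *
      ((1 - (1 - p i) * ∏ j ∈ S, (1 - p j)) - (1 - ∏ j ∈ S, (1 - p j)))

lemma prod_abs_diff_le {E : Type*} [DecidableEq E] (p q : E → ℝ)
    (hp : ∀ j, 0 ≤ p j ∧ p j ≤ 1) (hq : ∀ j, 0 ≤ q j ∧ q j ≤ 1)
    (δ : ℝ) (hδ : ∀ j, |q j - p j| ≤ δ) (S : Finset E) :
    |∏ j ∈ S, (1 - q j) - ∏ j ∈ S, (1 - p j)| ≤ S.card * δ := by
  induction S using Finset.induction with
  | empty => simp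
  | @insert x S hx ih =>
    rw [Finset.prod_insert hx, Finset.prod_insert hx, Finset.card_insert_of_notMem hx]
    set P := ∏ j ∈ S, (1 - q j) with hP
    set Q := ∏ j ∈ S, (1 - p j) with hQ
    have hQ0 : 0 ≤ Q := Finset.prod_nonneg fun j _ => by linarith [(hp j).2]
    have hQ1 : Q ≤ 1 := Finset.prod_le_one (fun j _ => by linarith [(hp j).2])
      (fun j _ => by linarith [(hp j).1])
    have ha0 : 0 ≤ 1 - q x := by linarith [(hq x).2]
    have ha1 : 1 - q x ≤ 1 := by linarith [(hq x).1]
    have habs : |(1 - q x) - (1 - p x)| ≤ δ := by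
      rw [show (1 - q x) - (1 - p x) = -(q x - p x) by ring, abs_neg]; exact hδ x
    have key : (1 - q x) * P - (1 - p x) * Q
        = (1 - q x) * (P - Q) + ((1 - q x) - (1 - p x)) * Q := by ring
    rw [key]
    calc |(1 - q x) * (P - Q) + ((1 - q x) - (1 - p x)) * Q|
        ≤ |(1 - q x) * (P - Q)| + |((1 - q x) - (1 - p x)) * Q| := abs_add_le _ _
      _ = (1 - q x) * |P - Q| + |(1 - q x) - (1 - p x)| * Q := by
          rw [abs_mul, abs_mul, abs_of_nonneg ha0, abs_of_nonneg hQ0]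
      _ ≤ 1 * (S.card * δ) + δ * 1 := by
          have h1 : (1 - q x) * |P - Q| ≤ 1 * (S.card * δ) :=
            mul_le_mul ha1 ih (abs_nonneg _) zero_le_one
          have h2 : |(1 - q x) - (1 - p x)| * Q ≤ δ * 1 :=
            mul_le_mul habs hQ1 hQ0 (le_trans (abs_nonneg _) habs)
          linarith
      _ ≤ (↑(S.card + 1)) * δ := by push_cast; linarith

theorem stmt_13 {E : Type*} [Fintype E] [DecidableEq E]
    (p q : E → ℝ) (hp : ∀ j, 0 ≤ p j ∧ p j ≤ 1) (hq : ∀ j, 0 ≤ q j ∧ q j ≤ 1)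
    (δ : ℝ) (hδ : ∀ j, |q j - p j| ≤ δ) (i : E) :
    |shapleyProb q i - shapleyProb p i| ≤ δ * ((Fintype.card E : ℝ) + 1) / 2 := by
  classical
  set n := Fintype.card E with hn
  have hn1 : 1 ≤ n := Fintype.card_pos_iff.mpr ⟨i⟩
  have hδ0 : 0 ≤ δ := le_trans (abs_nonneg _) (hδ i)
  set u := (Finset.univ.erase i) with hu
  have hucard : u.card = n - 1 := by
    rw [hu, Finset.card_erase_of_mem (Finset.mem_univ i), Finset.card_univ]
  unfold shapleyProb
  rw [← Finset.sum_sub_distrib]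
  refine le_trans (Finset.abs_sum_le_sum_abs _ _) ?_
  have hstep : ∀ S ∈ u.powerset,
      |(Nat.factorial S.card : ℝ) * (Nat.factorial (n - 1 - S.card)) / (Nat.factorial n) *
        ((1 - (1 - q i) * ∏ j ∈ S, (1 - q j)) - (1 - ∏ j ∈ S, (1 - q j))) -
       (Nat.factorial S.card : ℝ) * (Nat.factorial (n - 1 - S.card)) / (Nat.factorial n) *
        ((1 - (1 - p i) * ∏ j ∈ S, (1 - p j)) - (1 - ∏ j ∈ S, (1 - p j)))|
      ≤ (Nat.factorial S.card : ℝ) * (Nat.factorial (n - 1 - S.card)) / (Nat.factorial n) *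
        ((S.card + 1) * δ) := by
    intro S hS
    set w : ℝ := (Nat.factorial S.card : ℝ) * (Nat.factorial (n - 1 - S.card)) / (Nat.factorial n)
    have hw0 : 0 ≤ w := by positivity
    have hiS : i ∉ S := fun h => (Finset.mem_erase.mp (Finset.mem_powerset.mp hS h)).1 rfl
    set P := ∏ j ∈ S, (1 - q j) with hP
    set Q := ∏ j ∈ S, (1 - p j) with hQ
    have hP0 : 0 ≤ P := Finset.prod_nonneg fun j _ => by linarith [(hq j).2]
    have hP1 : P ≤ 1 := Finset.prod_le_one (fun j _ => by linarith [(hq j).2])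
      (fun j _ => by linarith [(hq j).1])
    have hprod : |P - Q| ≤ S.card * δ := prod_abs_diff_le p q hp hq δ hδ S
    have hmarg : |q i * P - p i * Q| ≤ (S.card + 1) * δ := by
      have key : q i * P - p i * Q = (q i - p i) * P + p i * (P - Q) := by ring
      rw [key]
      calc |(q i - p i) * P + p i * (P - Q)|
          ≤ |(q i - p i) * P| + |p i * (P - Q)| := abs_add_le _ _
        _ = |q i - p i| * P + p i * |P - Q| := by
            rw [abs_mul, abs_mul, abs_of_nonneg hP0, abs_of_nonneg (hp i).1]
        _ ≤ δ * 1 + 1 * (S.card * δ) := by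
            have h1 : |q i - p i| * P ≤ δ * 1 :=
              mul_le_mul (hδ i) hP1 hP0 hδ0
            have h2 : p i * |P - Q| ≤ 1 * (S.card * δ) :=
              mul_le_mul (hp i).2 hprod (abs_nonneg _) zero_le_one
            linarith
        _ = (S.card + 1) * δ := by ring
    have heq : w * ((1 - (1 - q i) * P) - (1 - P)) - w * ((1 - (1 - p i) * Q) - (1 - Q))
        = w * (q i * P - p i * Q) := by ring
    rw [heq, abs_mul, abs_of_nonneg hw0]
    exact mul_le_mul_of_nonneg_left hmarg hw0
  refine le_trans (Finset.sum_le_sum hstep) ?_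
  -- now compute the sum exactly
  rw [Finset.powerset_card_biUnion, Finset.sum_biUnion (fun a _ b _ h => Finset.pairwise_disjoint_powersetCard u h)]
  have hinner : ∀ k ∈ Finset.range (u.card + 1),
      ∑ S ∈ Finset.powersetCard k u,
        (Nat.factorial S.card : ℝ) * (Nat.factorial (n - 1 - S.card)) / (Nat.factorial n) *
          ((S.card + 1) * δ)
      = ((k : ℝ) + 1) * δ / n := by
    intro k hk
    have hk' : k ≤ n - 1 := by
      rw [Finset.mem_range] at hk; omega
    have hcongr : ∀ S ∈ Finset.powersetCard k u,
        (Nat.factorial S.card : ℝ) * (Nat.factorial (n - 1 - S.card)) / (Nat.factorial n) *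
          ((S.card + 1) * δ)
        = (Nat.factorial k : ℝ) * (Nat.factorial (n - 1 - k)) / (Nat.factorial n) *
          ((k + 1) * δ) := by
      intro S hS
      rw [(Finset.mem_powersetCard.mp hS).2]
    rw [Finset.sum_congr rfl hcongr, Finset.sum_const, Finset.card_powersetCard, hucard,
      nsmul_eq_mul]
    have hcf : ((n - 1).choose k : ℝ) * (Nat.factorial k) * (Nat.factorial (n - 1 - k))
        = (Nat.factorial (n - 1) : ℝ) := by
      rw [← Nat.cast_mul, ← Nat.cast_mul, Nat.choose_mul_factorial_mul_factorial hk']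
    have hnf : (n : ℝ) * (Nat.factorial (n - 1)) = (Nat.factorial n : ℝ) := by
      rw [← Nat.cast_mul, Nat.mul_factorial_pred (Nat.one_le_iff_ne_zero.mp hn1)]
    have hfn : (0:ℝ) < Nat.factorial n := by positivity
    have hn0 : (0:ℝ) < n := by positivity
    field_simp
    linear_combination δ * (n:ℝ) * hcf + δ * hnf
  rw [Finset.sum_congr rfl hinner]
  have hm : u.card + 1 = n := by omega
  rw [hm]
  have hgauss : (∑ k ∈ Finset.range n, (k : ℝ)) = n * (n - 1) / 2 := by
    have := Finset.sum_range_id_mul_two n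
    have h2 : ((∑ k ∈ Finset.range n, k : ℕ) : ℝ) * 2 = (n : ℝ) * ((n : ℝ) - 1) := by
      rw [← Nat.cast_ofNat, ← Nat.cast_mul, this, Nat.cast_mul, Nat.cast_sub hn1]
      push_cast; ring
    push_cast at h2 ⊢
    linarith
  have hsum : (∑ k ∈ Finset.range n, ((k : ℝ) + 1) * δ / n) = δ * ((n : ℝ) + 1) / 2 := by
    have hn0 : (n : ℝ) ≠ 0 := by positivity
    rw [← Finset.sum_div, ← Finset.sum_mul, Finset.sum_add_distrib, hgauss,
      Finset.sum_const, Finset.card_range, nsmul_eq_mul, mul_one]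
    field_simp
    ring
  rw [hsum]
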